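/- arXiv:1003.4829 — 2 statements merged into one kernel-verified Lean document; each statement's English description precedes it below -/
import Mathlib

section
/- Let Ω be a finite set with |Ω| = p^k for a prime p and integer k ≥ 1, and let G be a solvable subgroup of Sym(Ω) acting primitively on Ω. Then every element g ∈ G with g ≠ 1 has at most p^{k-1} fixed points in Ω. -/
/-! The last nontrivial term `N` of the derived series of `G` is an abelian normal subgroup. By
primitivity `N` is transitive, and a transitive abelian group acts regularly, so `|N| = p ^ k`.
If `g` fixes `x₀`, then `n ↦ n • x₀` maps the centralizer of `g` in `N` bijectively onto the
fixed points of `g`; as `g ≠ 1` this centralizer is a proper subgroup of the `p`-group `N`, of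
order at most `p ^ (k - 1)`. -/

/-- A group action is preprimitive if it is pretransitive and every block is trivial.
This matches Mathlib's `MulAction.IsPreprimitive`. -/
def IsPreprimitiveAction (G X : Type*) [Group G] [MulAction G X] : Prop :=
  MulAction.IsPretransitive G X ∧
    ∀ B : Set X, MulAction.IsBlock G B → MulAction.IsTrivialBlock B

open MulAction Subgroup

theorem Group.IsSolvable.exists_normal_isMulCommutative_ne_bot (G : Type*) [Group G]
    [Group.IsSolvable G] [Nontrivial G] :
    ∃ N : Subgroup G, N.Normal ∧ IsMulCommutative N ∧ N ≠ ⊥ := by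
  classical
  have hsolv : ∃ n, derivedSeries G n = ⊥ := Group.IsSolvable.solvable
  have hpos : Nat.find hsolv ≠ 0 := fun h0 =>
    top_ne_bot (derivedSeries_zero G ▸ h0 ▸ Nat.find_spec hsolv)
  refine ⟨derivedSeries G (Nat.find hsolv - 1), derivedSeries_normal G _, ?_,
    Nat.find_min hsolv (by omega)⟩
  rw [← commutator_self_eq_bot_iff, ← derivedSeries_succ, Nat.sub_add_cancel (by omega)]
  exact Nat.find_spec hsolv

theorem Subgroup.card_le_pow_pred_of_lt {G : Type*} [Group G] {p k : ℕ} (hp : p.Prime)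
    {H K : Subgroup G} (hHK : H < K) (hK : Nat.card K = p ^ k) : Nat.card H ≤ p ^ (k - 1) := by
  have : Finite K := Nat.finite_of_card_ne_zero (hK ▸ (pow_pos hp.pos k).ne')
  obtain ⟨i, hik, hi⟩ := (Nat.dvd_prime_pow hp).mp (hK ▸ card_dvd_of_le hHK.le)
  have hik' : i ≠ k := by
    rintro rfl
    exact hHK.ne (eq_of_le_of_card_ge hHK.le (by rw [hK, hi]))
  rw [hi]
  exact Nat.pow_le_pow_right hp.pos (by omega)

section Action

variable {G X : Type*} [Group G] [MulAction G X]

theorem MulAction.IsPreprimitive.isPretransitive_of_normal_of_ne_bot [IsPreprimitive G X]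
    [FaithfulSMul G X] {N : Subgroup G} [N.Normal] (hN : N ≠ ⊥) : IsPretransitive N X := by
  refine IsQuasiPreprimitive.isPretransitive_of_normal fun hfix => hN ?_
  refine (eq_bot_iff_forall N).mpr fun n hn => eq_of_smul_eq_smul (α := X) fun x => ?_
  rw [one_smul]
  exact mem_fixedPoints.mp (hfix ▸ Set.mem_univ x) ⟨n, hn⟩

def Subgroup.IsSemiregular (N : Subgroup G) (X : Type*) [MulAction G X] : Prop :=
  ∀ n ∈ N, ∀ x : X, n • x = x → n = 1

namespace Subgroup

variable {N : Subgroup G}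

theorem image_smul_eq_univ [IsPretransitive N X] (x₀ : X) :
    (· • x₀ : G → X) '' N = Set.univ :=
  Set.eq_univ_of_forall fun y =>
    let ⟨n, hn⟩ := MulAction.exists_smul_eq N x₀ y
    ⟨n, n.2, hn⟩

theorem isSemiregular_of_isMulCommutative [FaithfulSMul G X] [IsMulCommutative N]
    [IsPretransitive N X] : N.IsSemiregular X := by
  intro n hn x hx
  refine eq_of_smul_eq_smul (α := X) fun y => ?_
  obtain ⟨m, rfl⟩ := MulAction.exists_smul_eq N x y
  have hcomm : (⟨n, hn⟩ : N) * m = m * ⟨n, hn⟩ := Std.Commutative.comm _ _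
  calc n • m • x = (⟨n, hn⟩ * m : N) • x := (mul_smul _ _ _).symm
    _ = (m * ⟨n, hn⟩ : N) • x := by rw [hcomm]
    _ = m • x := by rw [mul_smul]; exact congrArg (m • ·) hx
    _ = (1 : G) • m • x := (one_smul _ _).symm

namespace IsSemiregular

theorem injOn_smul (hN : N.IsSemiregular X) (x₀ : X) : Set.InjOn (· • x₀ : G → X) N := by
  intro a ha b hb hab
  have hfix : (b⁻¹ * a) • x₀ = x₀ := by rw [mul_smul, inv_smul_eq_iff]; exact hab
  exact (inv_mul_eq_one.mp (hN _ (N.mul_mem (N.inv_mem hb) ha) x₀ hfix)).symm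

theorem card_eq_card [IsPretransitive N X] [Nonempty X] (hN : N.IsSemiregular X) :
    Nat.card N = Nat.card X := by
  obtain ⟨x₀⟩ := ‹Nonempty X›
  rw [← Set.ncard_univ X, ← image_smul_eq_univ (N := N) x₀, (hN.injOn_smul x₀).ncard_image,
    ← SetLike.coe_sort_coe, Nat.card_coe_set_eq]

theorem smul_mem_fixedBy_iff [N.Normal] (hN : N.IsSemiregular X) {g : G} {x₀ : X}
    (hx₀ : g • x₀ = x₀) {n : G} (hn : n ∈ N) :
    n • x₀ ∈ fixedBy X g ↔ n ∈ centralizer {g} := by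
  have hconj : g • n • x₀ = (g * n * g⁻¹) • x₀ := by
    rw [mul_smul, mul_smul, inv_smul_eq_iff.mpr hx₀.symm]
  rw [mem_fixedBy, hconj, mem_centralizer_singleton_iff]
  constructor
  · intro h
    have := hN.injOn_smul x₀ (Normal.conj_mem ‹_› n hn g) hn h
    exact (mul_inv_eq_iff_eq_mul.mp this).symm
  · intro h
    rw [← h, mul_inv_cancel_right]

theorem fixedBy_eq_image_smul [N.Normal] [IsPretransitive N X] (hN : N.IsSemiregular X)
    {g : G} {x₀ : X} (hx₀ : g • x₀ = x₀) :
    fixedBy X g = (· • x₀ : G → X) '' (N ⊓ centralizer {g} : Subgroup G) := by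
  ext y
  obtain ⟨n, hn, rfl⟩ := image_smul_eq_univ (N := N) x₀ ▸ Set.mem_univ y
  refine (hN.smul_mem_fixedBy_iff hx₀ hn).trans ⟨fun hc => ⟨n, ⟨hn, hc⟩, rfl⟩, ?_⟩
  rintro ⟨m, ⟨hmN, hmC⟩, hm⟩
  obtain rfl := hN.injOn_smul x₀ hmN hn hm
  exact hmC

theorem ncard_fixedBy [N.Normal] [IsPretransitive N X] (hN : N.IsSemiregular X) {g : G}
    {x₀ : X} (hx₀ : g • x₀ = x₀) :
    (fixedBy X g).ncard = Nat.card (N ⊓ centralizer {g} : Subgroup G) := by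
  rw [hN.fixedBy_eq_image_smul hx₀, ((hN.injOn_smul x₀).mono fun _ hn => hn.1).ncard_image,
    ← SetLike.coe_sort_coe, Nat.card_coe_set_eq]

theorem inf_centralizer_lt [FaithfulSMul G X] [N.Normal] [IsPretransitive N X]
    (hN : N.IsSemiregular X) {g : G} {x₀ : X} (hx₀ : g • x₀ = x₀) (hg : g ≠ 1) :
    N ⊓ centralizer {g} < N := by
  refine inf_le_left.lt_of_ne fun h => hg (eq_of_smul_eq_smul (α := X) fun y => ?_)
  have hy : y ∈ fixedBy X g := by
    rw [hN.fixedBy_eq_image_smul hx₀, h, image_smul_eq_univ]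
    trivial
  rwa [one_smul]

end IsSemiregular

end Subgroup

end Action

theorem fixed_points_le_of_solvable_primitive_general {Ω : Type*} [Fintype Ω]
    (p k : ℕ) (hp : p.Prime) (hcard : Fintype.card Ω = p ^ k)
    (G : Subgroup (Equiv.Perm Ω)) (hsolv : IsSolvable G)
    (hprim : IsPreprimitiveAction G Ω)
    (g : Equiv.Perm Ω) (hg : g ∈ G) (hne : g ≠ 1) :
    Nat.card {x : Ω // g x = x} ≤ p ^ (k - 1) := by
  have : IsPreprimitive G Ω := { hprim.1 with isTrivialBlock_of_isBlock := hprim.2 _ }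
  have : Group.IsSolvable G := hsolv
  set g' : G := ⟨g, hg⟩
  have hg' : g' ≠ 1 := fun h => hne (congrArg Subtype.val h)
  have : Nontrivial G := nontrivial_of_ne g' 1 hg'
  obtain ⟨N, _, _, hNbot⟩ := Group.IsSolvable.exists_normal_isMulCommutative_ne_bot G
  have := IsPreprimitive.isPretransitive_of_normal_of_ne_bot (X := Ω) hNbot
  have hreg : N.IsSemiregular Ω := isSemiregular_of_isMulCommutative
  rcases isEmpty_or_nonempty {x : Ω // g x = x} with _ | ⟨x₀, hx₀⟩
  · simp
  have : Nonempty Ω := ⟨x₀⟩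
  calc Nat.card {x : Ω // g x = x} = (fixedBy Ω g').ncard := Nat.card_coe_set_eq _
    _ = Nat.card (N ⊓ centralizer {g'} : Subgroup G) := hreg.ncard_fixedBy (x₀ := x₀) hx₀
    _ ≤ p ^ (k - 1) := card_le_pow_pred_of_lt hp (hreg.inf_centralizer_lt hx₀ hg')
      (by rw [hreg.card_eq_card, Nat.card_eq_fintype_card, hcard])

/-- If `G` is a solvable subgroup of the symmetric group of a finite set `Ω` with
`|Ω| = p ^ k` (`p` prime, `k ≥ 1`), acting primitively on `Ω`, then every `g ∈ G` with
`g ≠ 1` has at most `p ^ (k - 1)` fixed points in `Ω`. -/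
theorem fixed_points_le_of_solvable_primitive {Ω : Type*} [Fintype Ω]
    (p k : ℕ) (hp : p.Prime) (hk : 1 ≤ k) (hcard : Fintype.card Ω = p ^ k)
    (G : Subgroup (Equiv.Perm Ω)) (hsolv : IsSolvable G)
    (hprim : IsPreprimitiveAction G Ω)
    (g : Equiv.Perm Ω) (hg : g ∈ G) (hne : g ≠ 1) :
    Nat.card {x : Ω // g x = x} ≤ p ^ (k - 1) :=
  fixed_points_le_of_solvable_primitive_general p k hp hcard G hsolv hprim g hg hne
end

section
/- (Zariski, refined bound for p = 2) Let Ω be a finite set with |Ω| = 2^k for an integer k ≥ 1, suppose that 2^k − 1 is a prime number, and let G be a solvable subgroup of Sym(Ω) acting primitively on Ω. For g ∈ G with g ≠ 1, let r(g) denote the number of orbits of the cyclic subgroup generated by g on Ω, and set b(g) = |Ω| − r(g). Then b(g) ≥ 2^{k-1} − 1. -/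
/-!
A nontrivial `g ∈ G` has at most two fixed points. Since every other `⟨g⟩`-orbit has at least two
points, `2 r ≤ |Ω| + 2`, that is `b ≥ 2 ^ (k - 1) - 1`.

For the fixed points, let `p = |Ω| - 1` and let `g` fix `α`. A minimal normal subgroup `N` of `G`
is abelian and transitive, hence regular, and a minimal normal subgroup of the stabilizer `G_α`
gives an abelian `q`-group `B ≤ G_α` normalized by `G_α`. As `G = N G_α`, the centralizer of `B`
in `N` is normal in `G`; it is trivial, since otherwise it is transitive and `B` could not both
centralize it and fix `α`. This makes `α` the only fixed point of `B`, so `q ∣ |Ω| - 1 = p` by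
counting modulo `q`. A `p`-group with a single fixed point on `p + 1` points is transitive on the
other `p`, so `B` is transitive and, being abelian, regular on `Ω \ {α}`. If `g` fixes `β` and
`u • β` with `u ∈ B`, regularity makes `g` commute with `u`; for `u ≠ 1` the group `⟨u⟩` is again
transitive on `Ω \ {α}`, which would force `g = 1`.
-/

theorem IsPreprimitiveAction.isPreprimitive {G X : Type*} [Group G] [MulAction G X]
    (h : IsPreprimitiveAction G X) : MulAction.IsPreprimitive G X :=
  { h.1 with isTrivialBlock_of_isBlock := h.2 _ }

namespace Subgroup

variable {G : Type*} [Group G]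

def IsMinimalNormal (A : Subgroup G) : Prop :=
  Minimal (fun K : Subgroup G => K.Normal ∧ K ≠ ⊥) A

theorem exists_isMinimalNormal [Finite G] [Nontrivial G] : ∃ A : Subgroup G, A.IsMinimalNormal :=
  exists_minimal_of_wellFoundedLT _ ⟨⊤, inferInstance, top_ne_bot⟩

namespace IsMinimalNormal

variable {A : Subgroup G}

theorem normal (hA : A.IsMinimalNormal) : A.Normal := hA.prop.1

theorem ne_bot (hA : A.IsMinimalNormal) : A ≠ ⊥ := hA.prop.2

theorem le_centralizer [Group.IsSolvable G] (hA : A.IsMinimalNormal) : A ≤ centralizer A := by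
  have := hA.normal
  rw [← commutator_eq_bot_iff_le_centralizer]
  by_contra hne
  exact (Group.IsSolvable.commutator_lt_of_ne_bot hA.ne_bot).not_ge
    (hA.le_of_le ⟨inferInstance, hne⟩ (commutator_le_left A A))

theorem exists_isPGroup [Finite G] (hA : A.IsMinimalNormal) (hcomm : A ≤ centralizer A) :
    ∃ p, p.Prime ∧ IsPGroup p A := by
  have hAn := hA.normal
  obtain ⟨p, hp, hpA⟩ := Nat.exists_prime_and_dvd (card_eq_one.not.mpr hA.ne_bot)
  have := Fact.mk hp
  obtain ⟨a, ha⟩ := exists_prime_orderOf_dvd_card' p hpA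
  let T : Subgroup G :=
    { carrier := {x | x ∈ A ∧ x ^ p = 1}
      one_mem' := ⟨A.one_mem, one_pow p⟩
      mul_mem' := fun {x y} ⟨hx, hxp⟩ ⟨hy, hyp⟩ => ⟨A.mul_mem hx hy, by
        rw [Commute.mul_pow (mem_centralizer_iff.mp (hcomm hy) x hx), hxp, hyp, one_mul]⟩
      inv_mem' := fun ⟨hx, hxp⟩ => ⟨A.inv_mem hx, by rw [inv_pow, hxp, inv_one]⟩ }
  have hT : T.Normal := ⟨fun x ⟨hx, hxp⟩ g => ⟨hAn.conj_mem x hx g, by simp [conj_pow, hxp]⟩⟩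
  have haT : (a : G) ∈ T := ⟨a.2, by rw [← coe_pow, ← ha, pow_orderOf_eq_one, coe_one]⟩
  have hTbot : T ≠ ⊥ := fun h => hp.ne_one <| by
    rw [← ha, orderOf_eq_one_iff, ← OneMemClass.coe_eq_one, ← mem_bot, ← h]; exact haT
  have hTA : A ≤ T := hA.le_of_le ⟨hT, hTbot⟩ fun x hx => hx.1
  exact ⟨p, hp, fun x => ⟨1, Subtype.ext (by simpa using (hTA x.2).2)⟩⟩

end IsMinimalNormal

theorem exists_commutative_isPGroup_le_normalizer (H : Subgroup G) [Finite H]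
    [Group.IsSolvable H] [Nontrivial H] :
    ∃ B ≤ H, B ≠ ⊥ ∧ H ≤ normalizer B ∧ B ≤ centralizer B ∧ ∃ p, p.Prime ∧ IsPGroup p B := by
  obtain ⟨A, hA⟩ := exists_isMinimalNormal (G := H)
  have := hA.normal
  obtain ⟨p, hp, hAp⟩ := hA.exists_isPGroup hA.le_centralizer
  refine ⟨A.map H.subtype, map_subtype_le A,
    (map_eq_bot_iff_of_injective A H.subtype_injective).not.mpr hA.ne_bot, ?_, ?_,
    p, hp, hAp.map H.subtype⟩
  · simpa [normalizer_eq_top, ← MonoidHom.range_eq_map] using le_normalizer_map (H := A) H.subtype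
  · rintro _ ⟨a, ha, rfl⟩
    refine mem_centralizer_iff.mpr ?_
    rintro _ ⟨b, hb, rfl⟩
    exact congrArg Subtype.val (mem_centralizer_iff.mp (hA.le_centralizer ha) b hb)

theorem normalizer_le_normalizer_centralizer (B : Subgroup G) :
    normalizer (B : Set G) ≤ normalizer (centralizer (B : Set G) : Set G) := by
  refine le_normalizer_iff.mpr fun h hh c hc => mem_centralizer_iff.mpr fun b hb => ?_
  have hcomm := mem_centralizer_iff.mp hc _ ((mem_normalizer_iff''.mp hh b).mp hb)
  calc b * (h * c * h⁻¹) = h * (h⁻¹ * b * h * c) * h⁻¹ := by group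
    _ = h * (c * (h⁻¹ * b * h)) * h⁻¹ := by rw [hcomm]
    _ = h * c * h⁻¹ * b := by group

theorem le_normalizer_of_le_centralizer {N W : Subgroup G} (hW : W ≤ N) (hN : N ≤ centralizer N) :
    N ≤ normalizer (W : Set G) :=
  le_normalizer_iff.mpr fun n hn w hw => by
    rwa [(mem_centralizer_iff.mp (hN hn) w (hW hw)).symm, mul_inv_cancel_right]

end Subgroup

open MulAction Subgroup

theorem IsPGroup.orbit_eq_compl_singleton {K X : Type*} [Group K] [MulAction K X] [Finite X]
    {p : ℕ} [hp : Fact p.Prime] (hK : IsPGroup p K) (hX : Nat.card X = p + 1) {α β : X}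
    (hα : α ∈ fixedPoints K X) (hβ : β ∉ fixedPoints K X) : orbit K β = {α}ᶜ := by
  have hsub : orbit K β ⊆ {α}ᶜ := by
    rintro _ ⟨k, rfl⟩ (h : k • β = α)
    exact hβ ((eq_inv_smul_iff.mpr h).trans (hα k⁻¹) ▸ hα)
  have hcompl : ({α}ᶜ : Set X).ncard = p := by
    have := Set.ncard_add_ncard_compl {α}
    rw [Set.ncard_singleton, hX] at this
    omega
  obtain ⟨m, hm⟩ := hK.card_orbit β
  rw [Nat.card_coe_set_eq] at hm
  have hm0 : m ≠ 0 := by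
    rintro rfl
    rw [pow_zero] at hm
    exact hβ <| subsingleton_orbit_iff_mem_fixedPoints.mp <|
      Set.ncard_le_one_iff_subsingleton.mp hm.le
  have hm1 : m ≤ 1 := by
    rw [← Nat.pow_le_pow_iff_right hp.out.one_lt, pow_one, ← hm, ← hcompl]
    exact Set.ncard_le_ncard hsub
  exact Set.eq_of_subset_of_ncard_le hsub (by rw [hcompl, hm, show m = 1 by omega, pow_one])

namespace MulAction

variable {G X : Type*} [Group G] [MulAction G X]

theorem smul_eq_self_of_mem_centralizer {K : Subgroup G} {u : G} (hu : u ∈ centralizer K)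
    {x y : X} (hx : u • x = x) (hy : y ∈ orbit K x) : u • y = y := by
  obtain ⟨k, rfl⟩ := hy
  change u • (k : G) • x = (k : G) • x
  rw [smul_smul, ← mem_centralizer_iff.mp hu k k.2, mul_smul, hx]

theorem eq_one_of_mem_centralizer [FaithfulSMul G X] {K : Subgroup G} [IsPretransitive K X]
    {u : G} (hu : u ∈ centralizer K) {x : X} (hx : u • x = x) : u = 1 :=
  eq_of_smul_eq_smul fun y => by
    rw [one_smul]; exact smul_eq_self_of_mem_centralizer hu hx (by simp [orbit_eq_univ])

theorem eq_one_of_mem_centralizer_of_orbit_eq_compl [FaithfulSMul G X] {K : Subgroup G}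
    {u : G} (hu : u ∈ centralizer K) {α β : X} (hα : u • α = α) (hβ : u • β = β)
    (hK : orbit K β = {α}ᶜ) : u = 1 :=
  eq_of_smul_eq_smul fun y => by
    rw [one_smul]
    by_cases hy : y = α
    · rw [hy, hα]
    · exact smul_eq_self_of_mem_centralizer hu hβ (hK ▸ hy)

theorem isPretransitive_of_normal_of_ne_bot [IsPreprimitive G X] [FaithfulSMul G X]
    {N : Subgroup G} [N.Normal] (hN : N ≠ ⊥) : IsPretransitive N X :=
  IsQuasiPreprimitive.isPretransitive_of_normal fun h => hN <|
    (eq_bot_iff_forall N).mpr fun n hn => eq_of_smul_eq_smul fun x => by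
      rw [one_smul]; exact (Set.eq_univ_iff_forall.mp h x) ⟨n, hn⟩

theorem sup_stabilizer_eq_top (N : Subgroup G) [IsPretransitive N X] (α : X) :
    N ⊔ stabilizer G α = ⊤ := by
  refine eq_top_iff.mpr fun q _ => ?_
  obtain ⟨n, hn⟩ := exists_smul_eq N α (q • α)
  rw [← mul_inv_cancel_left (n : G) q]
  refine mul_mem_sup n.2 (mem_stabilizer_iff.mpr ?_)
  rw [mul_smul, ← hn, Subgroup.smul_def, inv_smul_smul]

theorem normal_inf_centralizer {N : Subgroup G} [N.Normal] [IsPretransitive N X]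
    (hN : N ≤ centralizer N) {B : Subgroup G} {α : X} (hB : stabilizer G α ≤ normalizer B) :
    (N ⊓ centralizer B).Normal := by
  rw [← normalizer_eq_top_iff, eq_top_iff, ← sup_stabilizer_eq_top N α]
  refine sup_le (le_normalizer_of_le_centralizer inf_le_left hN) ?_
  exact (le_inf le_normalizer_of_normal (hB.trans B.normalizer_le_normalizer_centralizer)).trans
    inf_normalizer_le_normalizer_inf

theorem fixedPoints_eq_singleton_of_le_normalizer [IsPreprimitive G X] [FaithfulSMul G X]
    {N : Subgroup G} [N.Normal] (hNbot : N ≠ ⊥) (hN : N ≤ centralizer N)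
    {B : Subgroup G} {α : X} (hBα : B ≤ stabilizer G α) (hB : stabilizer G α ≤ normalizer B)
    (hBbot : B ≠ ⊥) : fixedPoints B X = {α} := by
  have := isPretransitive_of_normal_of_ne_bot (X := X) hNbot
  have hW : N ⊓ centralizer B = ⊥ := by
    by_contra hW
    have := normal_inf_centralizer hN hB
    have := isPretransitive_of_normal_of_ne_bot (X := X) hW
    exact hBbot <| (eq_bot_iff_forall B).mpr fun u hu =>
      eq_one_of_mem_centralizer (K := N ⊓ centralizer B)
        (le_centralizer_iff.mp inf_le_right hu) (hBα hu)
  ext x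
  refine ⟨fun hx => ?_, fun hx u => by rw [Set.mem_singleton_iff.mp hx]; exact hBα u.2⟩
  obtain ⟨n, rfl⟩ := exists_smul_eq N α x
  suffices (n : G) ∈ N ⊓ centralizer B by
    rw [hW, mem_bot] at this
    rw [Subgroup.smul_def, this, one_smul, Set.mem_singleton_iff]
  refine ⟨n.2, mem_centralizer_iff.mpr fun u hu => ?_⟩
  -- `N` is regular and `n⁻¹ * (u * n * u⁻¹) ∈ N`
  have hfix : ((n : G)⁻¹ * (u * n * u⁻¹)) • α = α := by
    have hu' : u⁻¹ • α = α := inv_smul_eq_iff.mpr (hBα hu).symm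
    rw [mul_smul, mul_smul, mul_smul, hu', show u • (n : G) • α = (n : G) • α from hx ⟨u, hu⟩,
      inv_smul_smul]
  have := eq_one_of_mem_centralizer (K := N)
    (hN (mul_mem (inv_mem n.2) (Normal.conj_mem inferInstance _ n.2 u))) hfix
  rw [inv_mul_eq_one, eq_mul_inv_iff_mul_eq] at this
  exact this.symm

theorem eq_of_mem_fixedBy_of_isPGroup [FaithfulSMul G X] [Finite X] {p : ℕ} [Fact p.Prime]
    (hX : Nat.card X = p + 1) {B : Subgroup G} (hBcomm : B ≤ centralizer B)
    (hBp : IsPGroup p B) {α : X} (hBfix : fixedPoints B X = {α}) {g : G}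
    (hgB : g ∈ normalizer B) (hg : g ≠ 1) (hgα : g • α = α) {β γ : X}
    (hβ : β ∈ fixedBy X g) (hγ : γ ∈ fixedBy X g) (hβα : β ≠ α) (hγα : γ ≠ α) : β = γ := by
  have hαB : α ∈ fixedPoints B X := hBfix ▸ rfl
  have horbit {K : Subgroup G} (hK : K ≤ B) (hβK : β ∉ fixedPoints K X) :
      orbit K β = {α}ᶜ :=
    (hBp.to_le hK).orbit_eq_compl_singleton hX (fun k => hαB ⟨k, hK k.2⟩) hβK
  have hBβ : orbit B β = {α}ᶜ := horbit le_rfl (hBfix ▸ hβα)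
  obtain ⟨u, rfl⟩ : γ ∈ orbit B β := hBβ ▸ hγα
  have hgu : Commute g u := by
    have hmem : (u : G)⁻¹ * (g * u * g⁻¹) ∈ B :=
      mul_mem (inv_mem u.2) ((mem_normalizer_iff.mp hgB u).mp u.2)
    have hfix : ((u : G)⁻¹ * (g * u * g⁻¹)) • β = β := by
      rw [mul_smul, mul_smul, mul_smul, inv_smul_eq_iff.mpr hβ.symm,
        show g • (u : G) • β = (u : G) • β from hγ, inv_smul_smul]
    have := eq_one_of_mem_centralizer_of_orbit_eq_compl (hBcomm hmem) (hαB ⟨_, hmem⟩) hfix hBβ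
    rw [inv_mul_eq_one, eq_mul_inv_iff_mul_eq] at this
    exact this.symm
  by_contra hne
  refine hg (eq_one_of_mem_centralizer_of_orbit_eq_compl (K := zpowers (u : G)) ?_ hgα hβ
    (horbit (zpowers_le.mpr u.2) fun h => hne (h ⟨u, mem_zpowers _⟩).symm))
  rintro _ ⟨n, rfl⟩
  exact (hgu.zpow_right n).eq.symm

theorem ncard_fixedBy_le_two [Finite G] [Finite X] [FaithfulSMul G X] [IsPreprimitive G X]
    [Group.IsSolvable G] (hX : (Nat.card X - 1).Prime) {g : G} (hg : g ≠ 1) :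
    (fixedBy X g).ncard ≤ 2 := by
  rcases (fixedBy X g).eq_empty_or_nonempty with h | ⟨α, hα⟩
  · simp [h]
  rw [← Set.ncard_sdiff_singleton_add_one hα, Nat.add_le_add_iff_right, Set.ncard_le_one]
  rintro β ⟨hβ, hβα⟩ γ ⟨hγ, hγα⟩
  have : Nontrivial G := ⟨g, 1, hg⟩
  obtain ⟨N, hN⟩ := exists_isMinimalNormal (G := G)
  have := hN.normal
  have : Nontrivial (stabilizer G α) := ⟨⟨g, hα⟩, 1, fun h => hg (congrArg Subtype.val h)⟩
  obtain ⟨B, hBα, hBbot, hB, hBcomm, p, hp, hBp⟩ :=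
    (stabilizer G α).exists_commutative_isPGroup_le_normalizer
  have hBfix := fixedPoints_eq_singleton_of_le_normalizer hN.ne_bot hN.le_centralizer hBα hB hBbot
  have := Fact.mk hp
  have : Nonempty X := ⟨α⟩
  have hpX : p = Nat.card X - 1 := by
    have := hBp.card_modEq_card_fixedPoints X
    rw [hBfix, Nat.card_coe_set_eq, Set.ncard_singleton] at this
    exact (Nat.prime_dvd_prime_iff_eq hp hX).mp ((Nat.modEq_iff_dvd' Nat.card_pos).mp this.symm)
  exact eq_of_mem_fixedBy_of_isPGroup (by have := Nat.card_pos (α := X); omega) hBcomm hBp hBfix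
    (hB hα) hg hα hβ hγ (by simpa using hβα) (by simpa using hγα)

theorem fixedPoints_zpowers (g : G) : fixedPoints (zpowers g) X = fixedBy X g :=
  Set.ext fun _ => ⟨fun h => h ⟨g, mem_zpowers g⟩, fun h ⟨_, n, hn⟩ => hn ▸ mem_fixedBy_zpow h n⟩

theorem two_mul_card_orbitRel_quotient_le (M : Type*) [Group M] [MulAction M X] [Finite X] :
    2 * Nat.card (orbitRel.Quotient M X) ≤ Nat.card X + (fixedPoints M X).ncard := by
  classical
  have := Fintype.ofFinite X
  have := Fintype.ofFinite (orbitRel.Quotient M X)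
  let π : X → orbitRel.Quotient M X := Quotient.mk _
  let F := Finset.univ.filter (· ∈ fixedPoints M X)
  have hF : (fixedPoints M X).ncard = F.card := by
    rw [← Set.ncard_coe_finset]; congr; ext; simp [F]
  have hX : Nat.card X = ∑ q, (Finset.univ.filter (π · = q)).card := by
    rw [Nat.card_eq_fintype_card, ← Finset.card_univ]
    exact Finset.card_eq_sum_card_fiberwise fun _ _ => Finset.mem_univ _
  have hFsum : F.card = ∑ q, (F.filter (π · = q)).card :=
    Finset.card_eq_sum_card_fiberwise fun _ _ => Finset.mem_univ _
  rw [hX, hF, hFsum, ← Finset.sum_add_distrib, Nat.card_eq_fintype_card, ← Finset.card_univ,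
    mul_comm, ← smul_eq_mul, ← Finset.sum_const]
  refine Finset.sum_le_sum fun q _ => ?_
  obtain ⟨x, rfl⟩ : ∃ x, π x = q := Quotient.exists_rep q
  have hx : x ∈ Finset.univ.filter (π · = π x) := by simp
  by_cases hxF : x ∈ fixedPoints M X
  · have : 0 < (F.filter (π · = π x)).card := Finset.card_pos.mpr ⟨x, by simpa [F] using hxF⟩
    have := Finset.card_pos.mpr ⟨x, hx⟩
    omega
  · obtain ⟨m, hm⟩ := not_forall.mp hxF
    have hmx : m • x ∈ Finset.univ.filter (π · = π x) := by
      simpa using Quotient.sound (mem_orbit x m)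
    have := Finset.one_lt_card.mpr ⟨_, hmx, x, hx, hm⟩
    omega

end MulAction

theorem zariski_branch_multiplicity_bound_two_general {Ω : Type*} [Fintype Ω]
    (k : ℕ) (hcard : Fintype.card Ω = 2 ^ k)
    (hprime : Nat.Prime (2 ^ k - 1))
    (G : Subgroup (Equiv.Perm Ω)) (hsolv : IsSolvable G)
    (hprim : IsPreprimitiveAction G Ω)
    (g : Equiv.Perm Ω) (hg : g ∈ G) (hne : g ≠ 1)
    (r b : ℕ)
    (hr : r = Nat.card (MulAction.orbitRel.Quotient (Subgroup.zpowers g) Ω))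
    (hb : b = Fintype.card Ω - r) :
    2 ^ (k - 1) - 1 ≤ b := by
  have : Group.IsSolvable G := hsolv
  have := hprim.isPreprimitive
  have hcardΩ : Nat.card Ω = 2 ^ k := by rw [Nat.card_eq_fintype_card, hcard]
  have hfix : (fixedBy Ω g).ncard ≤ 2 :=
    ncard_fixedBy_le_two (G := G) (g := ⟨g, hg⟩) (by rwa [hcardΩ]) (by simpa using hne)
  have hcount := two_mul_card_orbitRel_quotient_le (X := Ω) (zpowers g)
  rw [fixedPoints_zpowers] at hcount
  have hk : k ≠ 0 := by rintro rfl; exact Nat.not_prime_zero hprime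
  have h2k : 2 ^ k = 2 * 2 ^ (k - 1) := by rw [← pow_succ', Nat.sub_add_cancel (by omega)]
  rw [hcardΩ] at hcount
  rw [hcard] at hb
  omega

/-- (Zariski, refined bound for `p = 2`) Let `G` be a solvable subgroup of the symmetric
group of a finite set `Ω` with `|Ω| = 2 ^ k`, `k ≥ 1`, where `2 ^ k - 1` is prime, acting
primitively on `Ω`. For `g ∈ G`, `g ≠ 1`, let `r` be the number of orbits of the cyclic
subgroup generated by `g` on `Ω` and `b = |Ω| - r`. Then `b ≥ 2 ^ (k - 1) - 1`. -/
theorem zariski_branch_multiplicity_bound_two {Ω : Type*} [Fintype Ω]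
    (k : ℕ) (hk : 1 ≤ k) (hcard : Fintype.card Ω = 2 ^ k)
    (hprime : Nat.Prime (2 ^ k - 1))
    (G : Subgroup (Equiv.Perm Ω)) (hsolv : IsSolvable G)
    (hprim : IsPreprimitiveAction G Ω)
    (g : Equiv.Perm Ω) (hg : g ∈ G) (hne : g ≠ 1)
    (r b : ℕ)
    (hr : r = Nat.card (MulAction.orbitRel.Quotient (Subgroup.zpowers g) Ω))
    (hb : b = Fintype.card Ω - r) :
    2 ^ (k - 1) - 1 ≤ b :=
  zariski_branch_multiplicity_bound_two_general k hcard hprime G hsolv hprim g hg hne r b hr hb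
end
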